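/- arXiv:2003.07231 — 4 statements merged into one kernel-verified Lean document; each statement's English description precedes it below -/
import Mathlib

section
/- Assume g(A N, ξ) = 0. Then the normal Jacobi operator annihilates A N and the tangential part of J A ξ: R̄(A N, N)N = 0 and R̄(φ(A ξ), N)N = 0, where φ(X) := J X - g(J X, N)·N. -/
/-!
The normal Jacobi operator `X ↦ R̄(X, N) N` is real linear in `X` and vanishes at `X = N`,
since `R̄(X, X) = 0`. Expanding `R̄(A N, N) N` with `A² = 1` and `g(N, N) = 1`, every term
either cancels or carries the factor `g(J A N, N) = g(A N, ξ) = 0`. Finally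
`A ξ = J A N`, so `φ(A ξ) = g(A N, N) N - A N` lies in the span of `N` and `A N`.
-/

noncomputable section

variable {V : Type*}

/-- The real inner product `g(x,y) = Re⟨x,y⟩` induced by the Hermitian inner product. -/
def g [NormedAddCommGroup V] [InnerProductSpace ℂ V] (x y : V) : ℝ := (inner ℂ x y : ℂ).re

/-- The curvature tensor of the complex quadric, modeled on a complex inner product space
with real structure `A` and complex structure `J = i·`. -/
def Rbar [NormedAddCommGroup V] [InnerProductSpace ℂ V] (A : V →ₗ[ℝ] V) (X Y Z : V) : V :=
  g Y Z • X - g X Z • Y + g (Complex.I • Y) Z • (Complex.I • X)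
    - g (Complex.I • X) Z • (Complex.I • Y)
    - (2 * g (Complex.I • X) Y) • (Complex.I • Z)
    + g (A Y) Z • A X - g (A X) Z • A Y
    + g (Complex.I • A Y) Z • (Complex.I • A X)
    - g (Complex.I • A X) Z • (Complex.I • A Y)

/-- The tangential part of `J X` on the hypersurface tangent space. -/
def phi [NormedAddCommGroup V] [InnerProductSpace ℂ V] (N X : V) : V :=
  Complex.I • X - g (Complex.I • X) N • N

section QuadricCurvature

variable [NormedAddCommGroup V] [InnerProductSpace ℂ V]

lemma g_self (x : V) : g x x = ‖x‖ ^ 2 :=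
  inner_self_eq_norm_sq (𝕜 := ℂ) x

lemma g_I_smul_self (x : V) : g (Complex.I • x) x = 0 := by
  simp [g, inner_self_eq_norm_sq_to_K, ← Complex.ofReal_pow]

lemma g_neg_left (x y : V) : g (-x) y = -g x y := by
  simp [g]

lemma g_sub_left (x x' y : V) : g (x - x') y = g x y - g x' y := by
  simp [g]

lemma g_smul_left (r : ℝ) (x y : V) : g (r • x) y = r * g x y := by
  simp [g, ← Complex.coe_smul, mul_comm]

lemma g_neg_right (x y : V) : g x (-y) = -g x y := by
  simp [g, inner_neg_right]

lemma g_I_smul_right (x y : V) : g x (Complex.I • y) = -g (Complex.I • x) y := by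
  simp [g, Complex.mul_re]

lemma Rbar_sub_left (A : V →ₗ[ℝ] V) (X X' Y Z : V) :
    Rbar A (X - X') Y Z = Rbar A X Y Z - Rbar A X' Y Z := by
  simp only [Rbar, smul_sub, map_sub, g_sub_left, sub_smul, mul_sub]
  abel

lemma Rbar_smul_left (A : V →ₗ[ℝ] V) (r : ℝ) (X Y Z : V) :
    Rbar A (r • X) Y Z = r • Rbar A X Y Z := by
  simp only [Rbar, map_smul, smul_comm Complex.I r, g_smul_left]
  module

lemma Rbar_self_self (A : V →ₗ[ℝ] V) (X Z : V) : Rbar A X X Z = 0 := by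
  simp only [Rbar, g_I_smul_self, mul_zero, zero_smul]
  abel

lemma phi_I_smul (N x : V) : phi N (Complex.I • x) = g x N • N - x := by
  rw [phi, smul_smul, Complex.I_mul_I, neg_one_smul, g_neg_left, neg_smul]
  abel

lemma Rbar_map_self_self_self (A : V →ₗ[ℝ] V) (hA_invol : ∀ x, A (A x) = x) (N : V)
    (hN : g N N = 1) (hAN : g (Complex.I • A N) N = 0) : Rbar A (A N) N N = 0 := by
  simp only [Rbar, hA_invol, hN, hAN, g_I_smul_self, one_smul, zero_smul, mul_zero]
  abel

end QuadricCurvature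

theorem stmt_5_general [NormedAddCommGroup V] [InnerProductSpace ℂ V]
    (A : V →ₗ[ℝ] V)
    (hA_invol : ∀ x, A (A x) = x)
    (hA_antiJ : ∀ x, A (Complex.I • x) = -(Complex.I • A x))
    (N : V) (hN : ‖N‖ = 1)
    (ξ : V) (hξ : ξ = -(Complex.I • N))
    (hANξ : g (A N) ξ = 0) :
    Rbar A (A N) N N = 0 ∧ Rbar A (phi N (A ξ)) N N = 0 := by
  have hNN : g N N = 1 := by rw [g_self, hN, one_pow]
  have hJAN : g (Complex.I • A N) N = 0 := by
    rwa [hξ, g_neg_right, g_I_smul_right, neg_neg] at hANξ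
  have hAN := Rbar_map_self_self_self A hA_invol N hNN hJAN
  refine ⟨hAN, ?_⟩
  rw [hξ, map_neg, hA_antiJ, neg_neg, phi_I_smul, Rbar_sub_left, Rbar_smul_left,
    Rbar_self_self, hAN, smul_zero, sub_zero]

/-- If `g(AN, ξ) = 0`, then the normal Jacobi operator annihilates `AN` and the
tangential part `φ(Aξ)` of `J A ξ`. -/
theorem stmt_5 [NormedAddCommGroup V] [InnerProductSpace ℂ V]
    (A : V →ₗ[ℝ] V)
    (hA_invol : ∀ x, A (A x) = x)
    (hA_antiJ : ∀ x, A (Complex.I • x) = -(Complex.I • A x))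
    (hA_herm : ∀ x y, (inner ℂ (A x) (A y) : ℂ) = inner ℂ y x)
    (N : V) (hN : ‖N‖ = 1)
    (ξ : V) (hξ : ξ = -(Complex.I • N))
    (hANξ : g (A N) ξ = 0) :
    Rbar A (A N) N N = 0 ∧ Rbar A (phi N (A ξ)) N N = 0 :=
  stmt_5_general A hA_invol hA_antiJ N hN ξ hξ hANξ
end
end

section
/- Suppose A N = N, let α ∈ ℝ, and let S : T → T be a g-symmetric real-linear map on T := {Y ∈ V : g(Y,N) = 0} satisfying A(S Y) = S Y - 2α·η(Y)·ξ for all Y ∈ T, where η(Y) := g(Y,ξ). Then S(A Y) = A(S Y) for all Y ∈ T, i.e. the shape operator commutes with the real structure A on the tangent space. -/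
/-!
Since `A` is an involution preserving `g`, it is `g`-symmetric, and `AN = N` makes it preserve
the tangent space `T`. The Weingarten identity says that `A ∘ S` differs from `S` by the symmetric
rank-one map `Y ↦ 2α η(Y) ξ`, so `A ∘ S` is symmetric on `T` as well. For symmetric `A` and `S`
this forces `g(S A Y, Z) = g(A Y, S Z) = g(Y, A S Z) = g(A S Y, Z)` for all `Z ∈ T`, and since
`S A Y - A S Y` lies in `T`, it vanishes.
-/

noncomputable section

variable {V : Type*}

open scoped RealInnerProductSpace

section RealInnerProductSpace

variable {E : Type*} [NormedAddCommGroup E] [InnerProductSpace ℝ E]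

theorem Submodule.eq_of_forall_inner_eq_of_mem {K : Submodule ℝ E} {u v : E} (hu : u ∈ K)
    (hv : v ∈ K) (h : ∀ z ∈ K, ⟪u, z⟫ = ⟪v, z⟫) : u = v := by
  have hself := h (u - v) (K.sub_mem hu hv)
  rw [← sub_eq_zero, ← inner_sub_left] at hself
  exact sub_eq_zero.mp (inner_self_eq_zero.mp hself)

theorem LinearMap.isSymmetric_of_involutive_of_inner_map_map {A : E →ₗ[ℝ] E}
    (hA_invol : ∀ x, A (A x) = x) (hA_inner : ∀ x y, ⟪A x, A y⟫ = ⟪y, x⟫) : A.IsSymmetric := by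
  intro x y
  rw [← hA_inner, hA_invol, real_inner_comm]

theorem LinearMap.IsSymmetric.apply_mem_orthogonal_singleton {A : E →ₗ[ℝ] E}
    (hA : A.IsSymmetric) {N Y : E} (hAN : A N = N) (hY : Y ∈ (ℝ ∙ N)ᗮ) :
    A Y ∈ (ℝ ∙ N)ᗮ := by
  rw [Submodule.mem_orthogonal_singleton_iff_inner_left] at hY ⊢
  rw [hA, hAN, hY]

theorem inner_apply_symm_of_eq_sub_smul_inner {K : Submodule ℝ E} {B S : E → E} {c : ℝ} {ξ : E}
    (hS : ∀ X ∈ K, ∀ Y ∈ K, ⟪S X, Y⟫ = ⟪X, S Y⟫)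
    (hB : ∀ Y ∈ K, B Y = S Y - (c * ⟪Y, ξ⟫) • ξ) {X Y : E} (hX : X ∈ K) (hY : Y ∈ K) :
    ⟪B X, Y⟫ = ⟪X, B Y⟫ := by
  rw [hB X hX, hB Y hY, inner_sub_left, inner_sub_right, inner_smul_left, inner_smul_right,
    hS X hX Y hY, real_inner_comm ξ Y]
  simp only [conj_trivial]
  ring

theorem apply_comm_of_isSymmetric_of_comp_symm {K : Submodule ℝ E} {A S : E →ₗ[ℝ] E}
    (hA : A.IsSymmetric) (hAK : ∀ Y ∈ K, A Y ∈ K) (hSK : ∀ Y ∈ K, S Y ∈ K)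
    (hS : ∀ X ∈ K, ∀ Y ∈ K, ⟪S X, Y⟫ = ⟪X, S Y⟫)
    (hAS : ∀ X ∈ K, ∀ Y ∈ K, ⟪A (S X), Y⟫ = ⟪X, A (S Y)⟫) {Y : E} (hY : Y ∈ K) :
    S (A Y) = A (S Y) := by
  refine K.eq_of_forall_inner_eq_of_mem (hSK _ (hAK Y hY)) (hAK _ (hSK Y hY)) fun Z hZ => ?_
  calc ⟪S (A Y), Z⟫ = ⟪A Y, S Z⟫ := hS _ (hAK Y hY) Z hZ
    _ = ⟪Y, A (S Z)⟫ := hA Y (S Z)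
    _ = ⟪A (S Y), Z⟫ := (hAS Y hY Z hZ).symm

end RealInnerProductSpace

theorem stmt_9_general [NormedAddCommGroup V] [InnerProductSpace ℂ V]
    (A : V →ₗ[ℝ] V)
    (hA_invol : ∀ x, A (A x) = x)
    (hA_herm : ∀ x y, (inner ℂ (A x) (A y) : ℂ) = inner ℂ y x)
    (N : V)
    (ξ : V)
    (hAN : A N = N)
    (α : ℝ) (S : V →ₗ[ℝ] V)
    (hS_tan : ∀ Y : V, g Y N = 0 → g (S Y) N = 0)
    (hS_sym : ∀ X Y : V, g X N = 0 → g Y N = 0 → g (S X) Y = g X (S Y))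
    (hWein : ∀ Y : V, g Y N = 0 → A (S Y) = S Y - (2 * α * g Y ξ) • ξ) :
    ∀ Y : V, g Y N = 0 → S (A Y) = A (S Y) := by
  let _ := InnerProductSpace.complexToReal (G := V)
  have hg : ∀ x y : V, g x y = ⟪x, y⟫ := fun _ _ => rfl
  have hT : ∀ Y, g Y N = 0 ↔ Y ∈ (ℝ ∙ N)ᗮ := fun Y => by
    rw [hg, Submodule.mem_orthogonal_singleton_iff_inner_left]
  simp only [hT] at hS_tan hS_sym hWein ⊢
  simp only [hg] at hS_sym hWein
  have hS : ∀ X ∈ (ℝ ∙ N)ᗮ, ∀ Y ∈ (ℝ ∙ N)ᗮ, ⟪S X, Y⟫ = ⟪X, S Y⟫ := fun X hX Y hY =>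
    hS_sym X Y hX hY
  have hA : A.IsSymmetric := LinearMap.isSymmetric_of_involutive_of_inner_map_map hA_invol
    fun x y => congrArg Complex.re (hA_herm x y)
  exact fun Y hY => apply_comm_of_isSymmetric_of_comp_symm hA
    (fun _ => hA.apply_mem_orthogonal_singleton hAN) hS_tan hS
    (fun _ hX _ hY => inner_apply_symm_of_eq_sub_smul_inner (B := fun Y => A (S Y)) hS hWein hX hY) hY

/-- If `AN = N` and `S` is a `g`-symmetric shape operator on `T = {Y : g(Y,N) = 0}`
satisfying the Weingarten identity `A(SY) = SY - 2αη(Y)ξ` on `T`, then `S` commutes with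
the real structure `A` on `T`. -/
theorem stmt_9 [NormedAddCommGroup V] [InnerProductSpace ℂ V]
    (A : V →ₗ[ℝ] V)
    (hA_invol : ∀ x, A (A x) = x)
    (hA_antiJ : ∀ x, A (Complex.I • x) = -(Complex.I • A x))
    (hA_herm : ∀ x y, (inner ℂ (A x) (A y) : ℂ) = inner ℂ y x)
    (N : V) (hN : ‖N‖ = 1)
    (ξ : V) (hξ : ξ = -(Complex.I • N))
    (hAN : A N = N)
    (α : ℝ) (S : V →ₗ[ℝ] V)
    (hS_tan : ∀ Y : V, g Y N = 0 → g (S Y) N = 0)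
    (hS_sym : ∀ X Y : V, g X N = 0 → g Y N = 0 → g (S X) Y = g X (S Y))
    (hWein : ∀ Y : V, g Y N = 0 → A (S Y) = S Y - (2 * α * g Y ξ) • ξ) :
    ∀ Y : V, g Y N = 0 → S (A Y) = A (S Y) :=
  stmt_9_general A hA_invol hA_herm N ξ hAN α S hS_tan hS_sym hWein
end
end

section
/- Suppose A N = N and that A X = -X for every X ∈ C := {X ∈ V : g(X,N) = 0 and g(X,ξ) = 0}. Then C = {0}; equivalently, the complex dimension of V is at most 1. -/
/-!
`C` is the orthogonal complement of the complex line `ℂ N`, so it is invariant under `J`. Since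
`A` anticommutes with `J`, every `X ∈ C` satisfies `J X = -J (A X) = A (J X) = -J X`, hence `X = 0`.
-/

noncomputable section

variable {V : Type*}

theorem eq_zero_of_map_eq_neg_of_anticommute_I [AddCommGroup V] [Module ℂ V] (A : V → V) {x : V}
    (hA : A (Complex.I • x) = -(Complex.I • A x)) (hx : A x = -x)
    (hIx : A (Complex.I • x) = -(Complex.I • x)) : x = 0 := by
  have hI : Complex.I • x = -(Complex.I • x) := by
    simpa only [hx, smul_neg, neg_neg, hIx] using hA.symm
  have h2I : (2 * Complex.I) • x = 0 := by
    rw [mul_smul, two_smul]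
    nth_rewrite 1 [hI]
    exact neg_add_cancel _
  exact (smul_eq_zero.1 h2I).resolve_left (by simp)

theorem finrank_le_one_of_orthogonal_span_singleton_eq_bot {𝕜 E : Type*} [RCLike 𝕜]
    [NormedAddCommGroup E] [InnerProductSpace 𝕜 E] (v : E) (h : (𝕜 ∙ v)ᗮ = ⊥) :
    Module.finrank 𝕜 E ≤ 1 := by
  have htop : (𝕜 ∙ v) = ⊤ := Submodule.orthogonal_eq_bot_iff.1 h
  exact finrank_le_one v fun w => Submodule.mem_span_singleton.1 (htop ▸ Submodule.mem_top)

theorem mem_orthogonal_span_singleton_iff_g [NormedAddCommGroup V] [InnerProductSpace ℂ V]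
    {X N : V} : X ∈ (ℂ ∙ N)ᗮ ↔ g X N = 0 ∧ g X (-(Complex.I • N)) = 0 := by
  have him : g X (-(Complex.I • N)) = (inner ℂ X N : ℂ).im := by
    simp [g, inner_neg_right, inner_smul_right]
  rw [Submodule.mem_orthogonal_singleton_iff_inner_left, him, g, Complex.ext_iff]
  simp

theorem stmt_12_general [NormedAddCommGroup V] [InnerProductSpace ℂ V]
    (A : V →ₗ[ℝ] V)
    (hA_antiJ : ∀ x, A (Complex.I • x) = -(Complex.I • A x))
    (N : V)
    (ξ : V) (hξ : ξ = -(Complex.I • N))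
    (hC : ∀ X : V, g X N = 0 → g X ξ = 0 → A X = -X) :
    (∀ X : V, g X N = 0 → g X ξ = 0 → X = 0) ∧ Module.finrank ℂ V ≤ 1 := by
  subst hξ
  have hC' : ∀ X ∈ (ℂ ∙ N)ᗮ, A X = -X := fun X hX =>
    hC X (mem_orthogonal_span_singleton_iff_g.1 hX).1 (mem_orthogonal_span_singleton_iff_g.1 hX).2
  have hperp : (ℂ ∙ N)ᗮ = ⊥ := (Submodule.eq_bot_iff _).2 fun X hX =>
    eq_zero_of_map_eq_neg_of_anticommute_I A (hA_antiJ X) (hC' X hX)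
      (hC' _ (Submodule.smul_mem _ _ hX))
  refine ⟨fun X h1 h2 => ?_, finrank_le_one_of_orthogonal_span_singleton_eq_bot N hperp⟩
  simpa [hperp] using mem_orthogonal_span_singleton_iff_g.2 ⟨h1, h2⟩

/-- If `AN = N` and `AX = -X` for every `X` in `C = {X : g(X,N) = 0, g(X,ξ) = 0}`, then
`C = {0}`; equivalently the complex dimension of `V` is at most `1`. -/
theorem stmt_12 [NormedAddCommGroup V] [InnerProductSpace ℂ V] [FiniteDimensional ℂ V]
    (A : V →ₗ[ℝ] V)
    (hA_invol : ∀ x, A (A x) = x)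
    (hA_antiJ : ∀ x, A (Complex.I • x) = -(Complex.I • A x))
    (hA_herm : ∀ x y, (inner ℂ (A x) (A y) : ℂ) = inner ℂ y x)
    (N : V) (hN : ‖N‖ = 1)
    (ξ : V) (hξ : ξ = -(Complex.I • N))
    (hAN : A N = N)
    (hC : ∀ X : V, g X N = 0 → g X ξ = 0 → A X = -X) :
    (∀ X : V, g X N = 0 → g X ξ = 0 → X = 0) ∧ Module.finrank ℂ V ≤ 1 :=
  stmt_12_general A hA_antiJ N ξ hξ hC
end
end

section
/- Assume g(A ξ, ξ) = 0 and g(A N, ξ) = 0 (𝔄-isotropic unit normal), let T := {Y ∈ V : g(Y,N) = 0}, B(X) := A X - g(A X,N)N, and C := {X ∈ T : g(X,ξ) = 0}. If B(X) = g(A ξ, X)·ξ for every X ∈ C, then every X ∈ C satisfies X = g(A ξ, X)·A ξ + g(A N, X)·A N; consequently the real dimension of C is at most 2, i.e. the complex dimension of V is at most 2. -/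
noncomputable section

variable {V : Type*}

/-- The tangential part of `A X` on the hypersurface tangent space. -/
def B [NormedAddCommGroup V] [InnerProductSpace ℂ V] (A : V →ₗ[ℝ] V) (N X : V) : V :=
  A X - g (A X) N • N

/-!
Since `A` is an involution with `⟨A x, A y⟩ = ⟨y, x⟩`, the normal component of `A X` is
`g(A X, N) = g(A N, X)`, so the hypothesis says `A X = g(Aξ, X)·ξ + g(AN, X)·N` for `X ∈ C`;
applying `A` once more gives the formula for `X`. Hence `C`, the real orthogonal complement of
`span_ℝ {N, ξ}`, lies in `span_ℝ {Aξ, AN}`, so `dim_ℝ V ≤ 2 + 2`.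
-/

section

variable [NormedAddCommGroup V] [InnerProductSpace ℂ V]

theorem g_comm (x y : V) : g x y = g y x := by
  rw [g, g, ← inner_conj_symm x y, Complex.conj_re]

theorem inner_apply_left_comm {A : V →ₗ[ℝ] V} (hA_invol : ∀ x, A (A x) = x)
    (hA_herm : ∀ x y, (inner ℂ (A x) (A y) : ℂ) = inner ℂ y x) (x y : V) :
    (inner ℂ (A x) y : ℂ) = inner ℂ (A y) x := by
  simpa only [hA_invol] using hA_herm x (A y)

theorem eq_smul_add_smul_of_B_eq {A : V →ₗ[ℝ] V} (hA_invol : ∀ x, A (A x) = x)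
    (hA_herm : ∀ x y, (inner ℂ (A x) (A y) : ℂ) = inner ℂ y x) {N ξ X : V}
    (hX : B A N X = g (A ξ) X • ξ) :
    X = g (A ξ) X • A ξ + g (A N) X • A N := by
  have hAX : A X = g (A ξ) X • ξ + g (A N) X • N := by
    have hnormal : g (A X) N = g (A N) X := by
      rw [g, g, inner_apply_left_comm hA_invol hA_herm]
    rw [B, hnormal] at hX
    linear_combination (norm := module) hX
  calc X = A (A X) := (hA_invol X).symm
    _ = g (A ξ) X • A ξ + g (A N) X • A N := by rw [hAX, map_add, map_smul, map_smul]

theorem finrank_span_pair_le {R M : Type*} [DivisionRing R] [AddCommGroup M] [Module R M]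
    (a b : M) : Module.finrank R (Submodule.span R {a, b}) ≤ 2 := by
  classical
  have hcoe : ((({a, b} : Finset M)) : Set M) = {a, b} := by simp
  rw [← hcoe]
  exact (finrank_span_finset_le_card _).trans ((Finset.card_insert_le _ _).trans (by simp))

theorem finrank_le_two_of_forall_mem_span [FiniteDimensional ℂ V] {u v a b : V}
    (h : ∀ X : V, g X u = 0 → g X v = 0 → X ∈ Submodule.span ℝ {a, b}) :
    Module.finrank ℂ V ≤ 2 := by
  let _ : InnerProductSpace ℝ V := InnerProductSpace.complexToReal
  have : FiniteDimensional ℝ V := FiniteDimensional.trans ℝ ℂ V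
  set W : Submodule ℝ V := Submodule.span ℝ {u, v}
  have hperp : Wᗮ ≤ Submodule.span ℝ {a, b} := by
    intro X hX
    have horth : ∀ y ∈ ({u, v} : Set V), g X y = 0 := fun y hy => by
      rw [g_comm]
      exact Submodule.inner_right_of_mem_orthogonal (Submodule.subset_span hy) hX
    exact h X (horth u (by simp)) (horth v (by simp))
  have hsum : Module.finrank ℝ W + Module.finrank ℝ Wᗮ = 2 * Module.finrank ℂ V := by
    rw [Submodule.finrank_add_finrank_orthogonal, finrank_real_of_complex]
  have hW : Module.finrank ℝ W ≤ 2 := finrank_span_pair_le u v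
  have hWperp : Module.finrank ℝ Wᗮ ≤ 2 :=
    (Submodule.finrank_mono hperp).trans (finrank_span_pair_le a b)
  omega

end

theorem stmt_16_general [NormedAddCommGroup V] [InnerProductSpace ℂ V] [FiniteDimensional ℂ V]
    (A : V →ₗ[ℝ] V)
    (hA_invol : ∀ x, A (A x) = x)
    (hA_herm : ∀ x y, (inner ℂ (A x) (A y) : ℂ) = inner ℂ y x)
    (N : V)
    (ξ : V)
    (hB : ∀ X : V, g X N = 0 → g X ξ = 0 → B A N X = g (A ξ) X • ξ) :
    (∀ X : V, g X N = 0 → g X ξ = 0 →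
      X = g (A ξ) X • A ξ + g (A N) X • A N) ∧
    Module.finrank ℂ V ≤ 2 := by
  have hC : ∀ X : V, g X N = 0 → g X ξ = 0 → X = g (A ξ) X • A ξ + g (A N) X • A N :=
    fun X hXN hXξ => eq_smul_add_smul_of_B_eq hA_invol hA_herm (hB X hXN hXξ)
  refine ⟨hC, finrank_le_two_of_forall_mem_span (u := N) (v := ξ) (a := A ξ) (b := A N)
    fun X hXN hXξ => ?_⟩
  exact Submodule.mem_span_pair.2 ⟨_, _, (hC X hXN hXξ).symm⟩

/-- 𝔄-isotropic case: if `B(X) = g(Aξ,X)·ξ` for all `X ∈ C = {X : g(X,N)=0, g(X,ξ)=0}`,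
then every `X ∈ C` equals `g(Aξ,X)·Aξ + g(AN,X)·AN`; hence `dim_ℝ C ≤ 2`, i.e. the
complex dimension of `V` is at most `2`. -/
theorem stmt_16 [NormedAddCommGroup V] [InnerProductSpace ℂ V] [FiniteDimensional ℂ V]
    (A : V →ₗ[ℝ] V)
    (hA_invol : ∀ x, A (A x) = x)
    (hA_antiJ : ∀ x, A (Complex.I • x) = -(Complex.I • A x))
    (hA_herm : ∀ x y, (inner ℂ (A x) (A y) : ℂ) = inner ℂ y x)
    (N : V) (hN : ‖N‖ = 1)
    (ξ : V) (hξ : ξ = -(Complex.I • N))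
    (hAξξ : g (A ξ) ξ = 0)
    (hANξ : g (A N) ξ = 0)
    (hB : ∀ X : V, g X N = 0 → g X ξ = 0 → B A N X = g (A ξ) X • ξ) :
    (∀ X : V, g X N = 0 → g X ξ = 0 →
      X = g (A ξ) X • A ξ + g (A N) X • A N) ∧
    Module.finrank ℂ V ≤ 2 :=
  stmt_16_general A hA_invol hA_herm N ξ hB
end
end
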